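/- arXiv:1707.04233 — 3 statements merged into one kernel-verified Lean document; each statement's English description precedes it below -/
import Mathlib

section
/- For all reals n > 0, delta >= 0, and k > 2*n*delta/3: max over k' >= 0 of min(n - 2*n*delta + max(0, k' - k), n - k') is at most n*(1 - 4*delta/3), with equality when k = 2*n*delta/3. -/
/-- Minimax computation in the lower bound for deterministic one-way channel simulations:
for `k ≥ 2*n*δ/3`, every `k' ≥ 0` satisfies
`min (n - 2nδ + max 0 (k'-k)) (n - k') ≤ n*(1 - 4δ/3)`, and when `k = 2*n*δ/3` the value
`n*(1 - 4δ/3)` is attained by some `k' ≥ 0`. -/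
theorem deterministic_lower_bound_minimax (n δ k : ℝ) (hn : 0 < n) (hδ : 0 ≤ δ)
    (hk : 2 * n * δ / 3 ≤ k) :
    (∀ k' : ℝ, 0 ≤ k' →
      min (n - 2 * n * δ + max 0 (k' - k)) (n - k') ≤ n * (1 - 4 * δ / 3)) ∧
    (k = 2 * n * δ / 3 → ∃ k' : ℝ, 0 ≤ k' ∧
      min (n - 2 * n * δ + max 0 (k' - k)) (n - k') = n * (1 - 4 * δ / 3)) := by
  constructor
  · intro k' hk'
    rcases le_total (4 * n * δ / 3) k' with h | h
    · exact min_le_of_right_le (by nlinarith)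
    · refine min_le_of_left_le ?_
      rcases le_total (k' - k) 0 with h2 | h2
      · rw [max_eq_left h2]; nlinarith
      · rw [max_eq_right h2]; nlinarith
  · intro hke
    refine ⟨4 * n * δ / 3, by positivity, ?_⟩
    have : max 0 (4 * n * δ / 3 - k) = 2 * n * δ / 3 := by
      rw [hke]; rw [max_eq_right (by nlinarith)]; ring
    rw [this]
    rw [min_eq_left (by nlinarith)]
    ring
end

section
/- In the interactive coding scheme over a (delta_b, r_b)-block corruption channel with inner block length r_bar, each corruption block of length r_b intersects at most max(r_b/r_bar, 1) + 1 <= 2*max(r_b/r_bar, 1) inner blocks (for r_bar <= r_b or r_bar >= r_b respectively), so the fraction of corrupted inner blocks is at most delta_bar = delta_b * max(1, r_bar/r_b); moreover, choosing r_bar = sqrt(r_b/delta_b) when r_b <= 1/delta_b and r_bar = r_b otherwise, the rate loss delta_bar + 1/r_bar is Theta(sqrt(delta_b * max(delta_b, 1/r_b))). -/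
/-- Block-corruption interactive coding rate computation. (i) Each corruption block of
length `r_b` intersects at most `max (r_b/rbar) 1 + 1 ≤ 2 * max (r_b/rbar) 1` inner blocks of
length `rbar`, so the fraction of corrupted inner blocks,
`(n*δ_b/r_b * max (r_b/rbar) 1) / (n/rbar)`, equals `δ_b * max 1 (rbar/r_b)`. (ii) Choosing
`rbar = sqrt(r_b/δ_b)` when `r_b ≤ 1/δ_b` and `rbar = r_b` otherwise, the rate loss
`δ_b * max 1 (rbar/r_b) + 1/rbar` is `Θ(sqrt(δ_b * max δ_b (1/r_b)))` with universal
constants. -/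
theorem block_corruption_rate_loss :
    (∀ r_b rbar : ℝ, 0 < r_b → 0 < rbar →
      max (r_b / rbar) 1 + 1 ≤ 2 * max (r_b / rbar) 1) ∧
    (∀ n δ_b r_b rbar : ℝ, 0 < n → 0 < δ_b → 0 < r_b → 0 < rbar →
      (n * δ_b / r_b * max (r_b / rbar) 1) / (n / rbar) = δ_b * max 1 (rbar / r_b)) ∧
    (∃ c1 c2 : ℝ, 0 < c1 ∧ 0 < c2 ∧ ∀ δ_b r_b : ℝ, 0 < δ_b → δ_b ≤ 1 → 0 < r_b →
      (let rbar : ℝ := if r_b ≤ 1 / δ_b then Real.sqrt (r_b / δ_b) else r_b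
       c1 * Real.sqrt (δ_b * max δ_b (1 / r_b))
          ≤ δ_b * max 1 (rbar / r_b) + 1 / rbar ∧
       δ_b * max 1 (rbar / r_b) + 1 / rbar
          ≤ c2 * Real.sqrt (δ_b * max δ_b (1 / r_b)))) := by
  refine ⟨?_, ?_, ?_⟩
  · intro r_b rbar _ _
    have h1 : (1:ℝ) ≤ max (r_b / rbar) 1 := le_max_right _ _
    linarith
  · intro n δ_b r_b rbar hn hδ hr hrb
    have hmax : max (r_b / rbar) 1 * (rbar / r_b) = max 1 (rbar / r_b) := by
      rw [max_mul_of_nonneg _ _ (by positivity : (0:ℝ) ≤ rbar / r_b)]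
      congr 1
      · field_simp
      · ring
    field_simp
    rw [← hmax]
    field_simp
  · refine ⟨1, 2, one_pos, two_pos, ?_⟩
    intro δ_b r_b hδ hδ1 hr
    by_cases hc : r_b ≤ 1 / δ_b
    · simp only [if_pos hc]
      set s := Real.sqrt (δ_b / r_b) with hs
      have hspos : 0 < s := Real.sqrt_pos.mpr (by positivity)
      have hsq : s * s = δ_b / r_b := Real.mul_self_sqrt (by positivity)
      have hrbar : Real.sqrt (r_b / δ_b) = s⁻¹ := by
        rw [show r_b / δ_b = (δ_b / r_b)⁻¹ by field_simp, Real.sqrt_inv]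
      have hmaxd : max δ_b (1 / r_b) = 1 / r_b := by
        rw [max_eq_right]
        rw [le_div_iff₀ hr]
        calc δ_b * r_b ≤ δ_b * (1/δ_b) := by
              exact mul_le_mul_of_nonneg_left hc hδ.le
          _ = 1 := by field_simp
      have htarget : Real.sqrt (δ_b * max δ_b (1 / r_b)) = s := by
        rw [hmaxd, hs]; congr 1; ring
      -- rbar ≥ r_b so max 1 (rbar/r_b) = rbar/r_b
      have hrb2 : r_b ≤ s⁻¹ := by
        rw [← hrbar, show r_b / δ_b = r_b * (1/δ_b) by ring]
        have h2 : r_b * r_b ≤ r_b * (1/δ_b) :=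
          mul_le_mul_of_nonneg_left hc hr.le
        nlinarith [Real.sq_sqrt (show (0:ℝ) ≤ r_b * (1/δ_b) by positivity),
          Real.sqrt_nonneg (r_b * (1/δ_b))]
      have hmax1 : max 1 (s⁻¹ / r_b) = s⁻¹ / r_b := by
        rw [max_eq_right]
        rw [le_div_iff₀ hr, one_mul]; exact hrb2
      rw [hrbar, htarget, hmax1]
      have hsq' : s * s * r_b = δ_b := by
        field_simp at hsq; linarith
      have key : δ_b * (s⁻¹ / r_b) = s := by
        field_simp
        nlinarith [hsq', hspos]
      have hinv : 1 / s⁻¹ = s := by field_simp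
      rw [key, hinv]
      constructor <;> linarith
    · simp only [if_neg hc]
      push_neg at hc
      have hd : 1 / r_b < δ_b := by
        rw [div_lt_iff₀ hr]
        calc 1 = δ_b * (1/δ_b) := by field_simp
          _ < δ_b * r_b := by exact mul_lt_mul_of_pos_left hc hδ
      have hmaxd : max δ_b (1 / r_b) = δ_b := max_eq_left hd.le
      have htarget : Real.sqrt (δ_b * max δ_b (1 / r_b)) = δ_b := by
        rw [hmaxd, ← pow_two, Real.sqrt_sq hδ.le]
      have hmax1 : max 1 (r_b / r_b) = 1 := by
        rw [div_self hr.ne']; simp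
      rw [htarget, hmax1, mul_one]
      constructor
      · have : 0 < 1 / r_b := by positivity
        linarith
      · have : 1 / r_b ≤ δ_b := hd.le
        linarith
end

section
/- Encoding a block of r_b bits as a number in base 2^{s/2} - 1 and mapping each base-(2^{s/2}-1) digit to a nonzero binary string of length s/2 produces a binary string containing no occurrence of the pattern 10^{s-1}, and uses at most r_b * (1 + 2^{-s/2+1}) bits, for any integers r_b >= 1 and even s >= 4. -/
/-!
Part (i): an occurrence of `10^{s-1}` starting at `i` needs the `2t - 1` positions after `i` to
be zero, but the aligned block starting at `(⌊i/t⌋ + 1) t` lies among them and contains a one.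

Part (ii): with `x = 2^t ≥ 4`, the ratio `log x / log (x - 1)` exceeds `1` by at most
`1 / ((x - 1) log (x - 1)) ≤ 2 / x`, so each digit carries at least `t / (1 + 2^{1-t})` bits.
-/

open Real

lemma exists_aligned_block_between (i : ℕ) {t : ℕ} (ht : 0 < t) :
    ∃ j, i < j * t ∧ (j + 1) * t ≤ i + 2 * t :=
  ⟨i / t + 1, by
    have := Nat.div_add_mod' i t
    have := Nat.mod_lt i ht
    simp only [add_mul, one_mul]
    omega⟩

lemma exists_true_in_window_of_blocks {t L : ℕ} {f : ℕ → Bool} (ht : 0 < t)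
    (hblocks : ∀ j, (j + 1) * t ≤ L → ∃ k ∈ Finset.Ico (j * t) ((j + 1) * t), f k = true)
    {i : ℕ} (hi : i + 2 * t ≤ L) :
    ∃ j, 1 ≤ j ∧ j < 2 * t ∧ f (i + j) = true := by
  obtain ⟨j, hij, hjt⟩ := exists_aligned_block_between i ht
  obtain ⟨k, hk, hfk⟩ := hblocks j (by omega)
  rw [Finset.mem_Ico] at hk
  exact ⟨k - i, by omega, by omega, by rwa [Nat.add_sub_cancel' (by omega)]⟩

lemma Real.log_le_one_add_two_div_mul_log_sub_one {x : ℝ} (hx : 4 ≤ x) :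
    log x ≤ (1 + 2 / x) * log (x - 1) := by
  have hx1 : 0 < x - 1 := by linarith
  have hgap : log x - log (x - 1) ≤ 1 / (x - 1) := by
    rw [← log_div (by linarith) hx1.ne']
    calc log (x / (x - 1)) ≤ x / (x - 1) - 1 := log_le_sub_one_of_pos (by positivity)
      _ = 1 / (x - 1) := by field_simp; ring
  have hlog : 1 ≤ log (x - 1) := by
    rw [le_log_iff_exp_le hx1]
    linarith [exp_one_lt_d9]
  have hquot : 1 / (x - 1) ≤ 2 / x := by
    rw [div_le_div_iff₀ hx1 (by linarith)]
    linarith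
  have : 2 / x ≤ 2 / x * log (x - 1) := le_mul_of_one_le_right (by positivity) hlog
  linarith

lemma four_le_two_pow {t : ℕ} (ht : 2 ≤ t) : (4 : ℝ) ≤ 2 ^ t :=
  calc (4 : ℝ) = 2 ^ 2 := by norm_num
    _ ≤ 2 ^ t := pow_le_pow_right₀ one_le_two ht

lemma le_one_add_two_mul_zpow_neg_mul_logb {t : ℕ} (ht : 2 ≤ t) :
    (t : ℝ) ≤ (1 + 2 * (2 : ℝ) ^ (-(t : ℤ))) * logb 2 ((2 : ℝ) ^ t - 1) := by
  have hkey := log_le_one_add_two_div_mul_log_sub_one (four_le_two_pow ht)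
  rw [log_pow] at hkey
  rw [zpow_neg, zpow_natCast, ← div_eq_mul_inv, logb, mul_div_assoc',
    le_div_iff₀ (log_pos one_lt_two)]
  exact hkey

lemma mul_ceil_div_le_of_le_mul {a b c r : ℝ} (ha : 0 ≤ a) (hb : 0 < b) (hr : 0 ≤ r)
    (h : a ≤ c * b) : a * ⌈r / b⌉ ≤ r * c + a := by
  have hab : a / b ≤ c := by rwa [div_le_iff₀ hb]
  calc a * ⌈r / b⌉ ≤ a * (r / b + 1) :=
        mul_le_mul_of_nonneg_left (Int.ceil_lt_add_one _).le ha
    _ = r * (a / b) + a := by ring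
    _ ≤ r * c + a := by gcongr

/-- Pattern-avoiding encoding. (i) A binary string of length `L` built from aligned blocks
of length `t = s/2` (with `s = 2*t` even, `t ≥ 2`), each of which is not all-zero,
contains no occurrence of the pattern `10^{s-1}`. (ii) Encoding a block of `r_b ≥ 1` bits
as a number in base `2^{s/2} - 1` uses `⌈r_b / log₂(2^{s/2} - 1)⌉` digits, each mapped to
`s/2` bits, for a total of at most `r_b * (1 + 2^{-s/2+1}) + s/2` bits. -/
theorem pattern_free_encoding (s t : ℕ) (hs : s = 2 * t) (ht : 2 ≤ t) :
    (∀ (L : ℕ) (f : ℕ → Bool),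
      (∀ j : ℕ, (j + 1) * t ≤ L → ∃ i ∈ Finset.Ico (j * t) ((j + 1) * t), f i = true) →
      ¬∃ i : ℕ, i + s ≤ L ∧ f i = true ∧
        ∀ j : ℕ, 1 ≤ j → j < s → f (i + j) = false) ∧
    (∀ r_b : ℕ, 1 ≤ r_b →
      (t : ℝ) * ⌈(r_b : ℝ) / Real.logb 2 ((2 : ℝ) ^ t - 1)⌉
        ≤ (r_b : ℝ) * (1 + 2 * (2 : ℝ) ^ (-(t : ℤ))) + t) := by
  subst hs
  refine ⟨fun L f hblocks ⟨i, hi, _, hzero⟩ => ?_, fun r _ => ?_⟩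
  · obtain ⟨j, hj1, hjs, hfj⟩ := exists_true_in_window_of_blocks (by omega) hblocks hi
    simp [hzero j hj1 hjs] at hfj
  · have hdigit : 0 < logb 2 ((2 : ℝ) ^ t - 1) :=
      logb_pos one_lt_two (by linarith [four_le_two_pow ht])
    exact mul_ceil_div_le_of_le_mul (Nat.cast_nonneg t) hdigit (Nat.cast_nonneg r)
      (le_one_add_two_mul_zpow_neg_mul_logb ht)
end
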